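/- Mirroring lemma: in any Kripke structure, for any world w, w-valuation e, flower φ and substitution σ with support x⃗ such that σ is capture-avoiding in φ and x⃗ ∩ bv(φ) = ∅: w ⊩ σ(φ)[e] if and only if w ⊩ φ[e⟨x⃗ ↦ ⟦σ⟧_e⟩], where ⟦σ⟧_e(x) = e(σ(x)) and e⟨x⃗↦f⟩ updates e to agree with f on x⃗. -/
import Mathlib


/-! # The flower calculus (Donato), common definitions

Flowers and gardens over a first-order signature `(P, ar)` and variables `V`.
Finite multisets are represented as lists. -/

namespace Flowers

mutual
/-- Flowers: atoms `p(x⃗)` or `γ ⫐ Δ` with pistil `γ` and petals `Δ`. -/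
inductive Flower (V P : Type) (ar : P → ℕ) : Type where
  | atom (p : P) (args : Fin (ar p) → V) : Flower V P ar
  | flw (pistil : Garden V P ar) (petals : List (Garden V P ar)) : Flower V P ar
/-- Gardens: a finite set of binders together with a bouquet of flowers. -/
inductive Garden (V P : Type) (ar : P → ℕ) : Type where
  | mk (binders : List V) (content : List (Flower V P ar)) : Garden V P ar
end

/-- A bouquet is a finite multiset of flowers. -/
abbrev Bouquet (V P : Type) (ar : P → ℕ) := List (Flower V P ar)

variable {V P : Type} [DecidableEq V] {ar : P → ℕ}

def Garden.binders : Garden V P ar → List V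
  | .mk xs _ => xs

def Garden.content : Garden V P ar → List (Flower V P ar)
  | .mk _ Φ => Φ

/-! ## Substitutions -/

/-- The support of a substitution `σ : V → V`. -/
def Supp (σ : V → V) : Set V := {x | σ x ≠ x}

/-- Restriction of a substitution away from a list of (re)bound variables. -/
def restrict (σ : V → V) (xs : List V) : V → V := fun x => if x ∈ xs then x else σ x

mutual
/-- Action of a substitution on a flower. -/
def applyF (σ : V → V) : Flower V P ar → Flower V P ar
  | .atom p args => .atom p (σ ∘ args)
  | .flw (.mk xs Φ) Δ =>
      .flw (.mk xs (applyL (restrict σ xs) Φ)) (applyP (restrict σ xs) Δ)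
/-- Action of a substitution on a bouquet. -/
def applyL (σ : V → V) : List (Flower V P ar) → List (Flower V P ar)
  | [] => []
  | φ :: Φ => applyF σ φ :: applyL σ Φ
/-- Action of a substitution on a corolla (list of gardens). -/
def applyP (σ : V → V) : List (Garden V P ar) → List (Garden V P ar)
  | [] => []
  | .mk ys Ψ :: Δ => .mk ys (applyL (restrict σ ys) Ψ) :: applyP σ Δ
end

/-- Action of a substitution on a garden. -/
def applyG (σ : V → V) : Garden V P ar → Garden V P ar
  | .mk xs Φ => .mk xs (applyL (restrict σ xs) Φ)

mutual
/-- Bound variables of a flower. -/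
def bvF : Flower V P ar → List V
  | .atom _ _ => []
  | .flw γ Δ => bvG γ ++ bvP Δ
/-- Bound variables of a garden. -/
def bvG : Garden V P ar → List V
  | .mk xs Φ => xs ++ bvL Φ
/-- Bound variables of a bouquet. -/
def bvL : List (Flower V P ar) → List V
  | [] => []
  | φ :: Φ => bvF φ ++ bvL Φ
/-- Bound variables of a corolla. -/
def bvP : List (Garden V P ar) → List V
  | [] => []
  | γ :: Δ => bvG γ ++ bvP Δ
end

/-- `σ` is capture-avoiding in a bouquet `Φ`: `σ(dom σ) ∩ bv(Φ) = ∅`. -/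
def CaptAvoid (σ : V → V) (Φ : Bouquet V P ar) : Prop :=
  ∀ x, σ x ≠ x → σ x ∉ bvL Φ

/-! ## Contexts -/

/-- Contexts: a bouquet with exactly one hole, which may occur at top level,
inside the pistil, or inside a petal of a flower. -/
inductive Ctx (V P : Type) (ar : P → ℕ) : Type where
  | hole (Ψ : List (Flower V P ar)) : Ctx V P ar
  | pistil (Ψ : List (Flower V P ar)) (xs : List V) (c : Ctx V P ar)
      (Δ : List (Garden V P ar)) : Ctx V P ar
  | petal (Ψ : List (Flower V P ar)) (γ : Garden V P ar) (xs : List V) (c : Ctx V P ar)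
      (Δ : List (Garden V P ar)) : Ctx V P ar

/-- Filling the hole of a context with a bouquet. -/
def Ctx.fill : Ctx V P ar → Bouquet V P ar → Bouquet V P ar
  | .hole Ψ, Φ => Ψ ++ Φ
  | .pistil Ψ xs c Δ, Φ => Ψ ++ [.flw (.mk xs (c.fill Φ)) Δ]
  | .petal Ψ γ xs c Δ, Φ => Ψ ++ [.flw γ (.mk xs (c.fill Φ) :: Δ)]

/-- Adjoining a bouquet at the top level of a context. -/
def Ctx.prepend (Φ : Bouquet V P ar) : Ctx V P ar → Ctx V P ar
  | .hole Ψ => .hole (Φ ++ Ψ)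
  | .pistil Ψ xs c Δ => .pistil (Φ ++ Ψ) xs c Δ
  | .petal Ψ γ xs c Δ => .petal (Φ ++ Ψ) γ xs c Δ

/-- Filling the hole of a context with another context. -/
def Ctx.fillCtx : Ctx V P ar → Ctx V P ar → Ctx V P ar
  | .hole Ψ, c' => c'.prepend Ψ
  | .pistil Ψ xs c Δ, c' => .pistil Ψ xs (c.fillCtx c') Δ
  | .petal Ψ γ xs c Δ, c' => .petal Ψ γ xs (c.fillCtx c') Δ

/-- Number of inversions (pistils enclosing the hole) of a context. -/
def Ctx.inv : Ctx V P ar → ℕ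
  | .hole _ => 0
  | .pistil _ _ c _ => 1 + c.inv
  | .petal _ _ _ c _ => c.inv

def Ctx.Positive (Ξ : Ctx V P ar) : Prop := Even Ξ.inv
def Ctx.Negative (Ξ : Ctx V P ar) : Prop := ¬ Even Ξ.inv

/-! ## Pollination -/

/-- A flower `φ` can be pollinated in a context `Ξ`. -/
def PollinatedF (φ : Flower V P ar) (Ξ : Ctx V P ar) : Prop :=
  ∃ (Ψ : Bouquet V P ar), φ ∈ Ψ ∧ ∃ (Ξ' Ξ₀ : Ctx V P ar),
    (Ξ = Ξ'.fillCtx (Ξ₀.prepend Ψ)) ∨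
    (∃ (xs ys : List V) (Δ : List (Garden V P ar)),
      Ξ = Ξ'.fillCtx (Ctx.petal [] (.mk xs Ψ) ys Ξ₀ Δ))

/-- A bouquet can be pollinated in `Ξ` if each of its flowers can. -/
def Pollinated (Φ : Bouquet V P ar) (Ξ : Ctx V P ar) : Prop :=
  ∀ φ ∈ Φ, PollinatedF φ Ξ

/-! ## Rules. A step `Φ ⇝ Ψ` has conclusion `Φ` and premiss `Ψ`
(backward / bottom-up reading). -/

/-- Shallow natural steps: instances of the natural rules 𝒩 in the empty context. -/
inductive NShallow : Bouquet V P ar → Bouquet V P ar → Prop where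
  | polld (Ξ : Ctx V P ar) (Φ : Bouquet V P ar) (h : Pollinated Φ Ξ) :
      NShallow (Ξ.fill Φ) (Ξ.fill [])
  | pollu (Ξ : Ctx V P ar) (Φ : Bouquet V P ar) (h : Pollinated Φ Ξ) :
      NShallow (Ξ.fill []) (Ξ.fill Φ)
  | epis (Φ : Bouquet V P ar) :
      NShallow [.flw (.mk [] []) [.mk [] Φ]] Φ
  | epet (γ : Garden V P ar) (Δ₁ Δ₂ : List (Garden V P ar)) :
      NShallow [.flw γ (Δ₁ ++ .mk [] [] :: Δ₂)] []
  | srep (xs : List V) (Φ₁ Φ₂ : List (Flower V P ar)) (γs Δ : List (Garden V P ar)) :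
      NShallow [.flw (.mk xs (Φ₁ ++ .flw (.mk [] []) γs :: Φ₂)) Δ]
        [.flw (.mk xs (Φ₁ ++ Φ₂)) [.mk [] (γs.map (fun γ => .flw γ Δ))]]
  | ipis (xs ys : List V) (Φ : List (Flower V P ar)) (Δ : List (Garden V P ar))
      (σ : V → V) (hsupp : Supp σ = {x | x ∈ ys})
      (hca : CaptAvoid σ [.flw (.mk [] Φ) Δ]) :
      NShallow [.flw (.mk (xs ++ ys) Φ) Δ]
        [.flw (.mk xs (applyL σ Φ)) (applyP σ Δ), .flw (.mk (xs ++ ys) Φ) Δ]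
  | ipet (γ : Garden V P ar) (xs ys : List V) (Φ : List (Flower V P ar))
      (Δ₁ Δ₂ : List (Garden V P ar)) (σ : V → V) (hsupp : Supp σ = {x | x ∈ ys})
      (hca : CaptAvoid σ Φ) :
      NShallow [.flw γ (Δ₁ ++ .mk (xs ++ ys) Φ :: Δ₂)]
        [.flw γ (Δ₁ ++ .mk xs (applyL σ Φ) :: .mk (xs ++ ys) Φ :: Δ₂)]

/-- Natural steps: shallow natural steps closed under arbitrary contexts. -/
def NStep (Φ Ψ : Bouquet V P ar) : Prop :=
  ∃ (Ξ : Ctx V P ar) (Φ₀ Ψ₀ : Bouquet V P ar),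
    NShallow Φ₀ Ψ₀ ∧ Φ = Ξ.fill Φ₀ ∧ Ψ = Ξ.fill Ψ₀

/-- Cultural steps, applying in positive or negative contexts. -/
inductive CStep : Bouquet V P ar → Bouquet V P ar → Prop where
  | grow (Ξ : Ctx V P ar) (hΞ : Ξ.Positive) (Φ : Bouquet V P ar) :
      CStep (Ξ.fill []) (Ξ.fill Φ)
  | crop (Ξ : Ctx V P ar) (hΞ : Ξ.Negative) (Φ : Bouquet V P ar) :
      CStep (Ξ.fill Φ) (Ξ.fill [])
  | pull (Ξ : Ctx V P ar) (hΞ : Ξ.Positive) (γ : Garden V P ar)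
      (Γ Δ : List (Garden V P ar)) :
      CStep (Ξ.fill [.flw γ (Γ ++ Δ)]) (Ξ.fill [.flw γ Δ])
  | glue (Ξ : Ctx V P ar) (hΞ : Ξ.Negative) (γ : Garden V P ar)
      (Γ Δ : List (Garden V P ar)) :
      CStep (Ξ.fill [.flw γ Δ]) (Ξ.fill [.flw γ (Γ ++ Δ)])
  | apis (Ξ : Ctx V P ar) (hΞ : Ξ.Positive) (xs ys : List V)
      (Φ : List (Flower V P ar)) (Δ : List (Garden V P ar)) (σ : V → V)
      (hsupp : Supp σ = {x | x ∈ ys}) (hca : CaptAvoid σ [.flw (.mk [] Φ) Δ]) :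
      CStep (Ξ.fill [.flw (.mk xs (applyL σ Φ)) (applyP σ Δ)])
        (Ξ.fill [.flw (.mk (xs ++ ys) Φ) Δ])
  | apet (Ξ : Ctx V P ar) (hΞ : Ξ.Negative) (γ : Garden V P ar) (xs ys : List V)
      (Φ : List (Flower V P ar)) (Δ : List (Garden V P ar)) (σ : V → V)
      (hsupp : Supp σ = {x | x ∈ ys}) (hca : CaptAvoid σ Φ) :
      CStep (Ξ.fill [.flw γ (.mk xs (applyL σ Φ) :: Δ)])
        (Ξ.fill [.flw γ (.mk (xs ++ ys) Φ :: Δ)])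

/-- A step in the full flower calculus 𝒩 ∪ 𝒞. -/
def Step (Φ Ψ : Bouquet V P ar) : Prop := NStep Φ Ψ ∨ CStep Φ Ψ

/-- Derivations: finite sequences of rewrite steps. -/
def Deriv (R : Bouquet V P ar → Bouquet V P ar → Prop) :
    Bouquet V P ar → Bouquet V P ar → Prop :=
  Relation.ReflTransGen R

/-- Hypothetical provability `Ψ ⊢_R Φ`. -/
def HypProv (R : Bouquet V P ar → Bouquet V P ar → Prop) (Ψ Φ : Bouquet V P ar) : Prop :=
  ∀ Ξ : Ctx V P ar, Pollinated Ψ Ξ → Deriv R (Ξ.fill Φ) (Ξ.fill [])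

/-! ## Theories -/

/-- Provability of a bouquet from a theory (in the natural fragment). -/
def TDerives (T : Set (Flower V P ar)) (Φ : Bouquet V P ar) : Prop :=
  ∃ Ψ : Bouquet V P ar, (∀ φ ∈ Ψ, φ ∈ T) ∧ HypProv NStep Ψ Φ

/-- `ψ`-consistency of a theory. -/
def PsiConsistent (ψ : Flower V P ar) (T : Set (Flower V P ar)) : Prop :=
  ¬ TDerives T [ψ]

/-- `ψ`-completeness of a theory. -/
def PsiComplete (ψ : Flower V P ar) (T : Set (Flower V P ar)) : Prop :=
  ∀ φ : Flower V P ar, TDerives (insert φ T) [ψ] ∨ φ ∈ T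

/-! ## Kripke semantics -/

/-- Kripke structures over the signature `(P, ar)`, with monotone domains `M w`
inside an ambient type `D` and monotone interpretations. -/
structure Kripke (V P : Type) (ar : P → ℕ) where
  W : Type
  D : Type
  le : W → W → Prop
  le_refl : ∀ w, le w w
  le_trans : ∀ {a b c}, le a b → le b c → le a c
  M : W → Set D
  M_nonempty : ∀ w, (M w).Nonempty
  interp : (p : P) → W → Set (Fin (ar p) → D)
  interp_dom : ∀ p w f, f ∈ interp p w → ∀ i, f i ∈ M w
  M_mono : ∀ {w w'}, le w w' → M w ⊆ M w'
  interp_mono : ∀ (p : P) {w w'}, le w w' → interp p w ⊆ interp p w'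

/-- `e` is a `w`-valuation. -/
def Kripke.IsVal (K : Kripke V P ar) (w : K.W) (e : V → K.D) : Prop :=
  ∀ x, e x ∈ K.M w

/-- Update of a valuation on a set of variables: `e⟨xs ↦ e'⟩`. -/
def upd {D : Type} (e : V → D) (xs : List V) (e' : V → D) : V → D :=
  fun x => if x ∈ xs then e' x else e x

mutual
/-- Forcing of a flower: `w ⊩ φ[e]`. -/
def forcesF (K : Kripke V P ar) (w : K.W) (e : V → K.D) : Flower V P ar → Prop
  | .atom p args => (fun i => e (args i)) ∈ K.interp p w
  | .flw (.mk xs Φ) Δ =>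
      ∀ w', K.le w w' → ∀ e' : V → K.D, K.IsVal w' e' →
        forcesL K w' (upd e xs e') Φ → forcesP K w' (upd e xs e') Δ
/-- Forcing of a bouquet: each of its flowers is forced. -/
def forcesL (K : Kripke V P ar) (w : K.W) (e : V → K.D) : List (Flower V P ar) → Prop
  | [] => True
  | φ :: Φ => forcesF K w e φ ∧ forcesL K w e Φ
/-- Forcing of the petals: some petal has its content forced for some valuation
of its binders. -/
def forcesP (K : Kripke V P ar) (w : K.W) (e : V → K.D) : List (Garden V P ar) → Prop
  | [] => False
  | .mk ys Ψ :: Δ =>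
      (∃ e'' : V → K.D, K.IsVal w e'' ∧ forcesL K w (upd e ys e'') Ψ) ∨ forcesP K w e Δ
end

/-- Semantic entailment `Φ ⊨ Ψ`: in every Kripke structure, every world and
valuation forcing `Φ` forces `Ψ`. -/
def SemEntails (Φ Ψ : Bouquet V P ar) : Prop :=
  ∀ (K : Kripke V P ar) (w : K.W) (e : V → K.D),
    K.IsVal w e → forcesL K w e Φ → forcesL K w e Ψ

/-! ## The universal Kripke structure -/

/-- The universal Kripke structure `𝔉(ψ)`: worlds are the `ψ`-consistent and
`ψ`-complete theories ordered by inclusion, the domain is `V`, and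
`⟦p⟧_𝒯 = {x⃗ | p(x⃗) ∈ 𝒯}`. -/
noncomputable def universalKripke [Nonempty V] (ψ : Flower V P ar) : Kripke V P ar where
  W := {T : Set (Flower V P ar) // PsiConsistent ψ T ∧ PsiComplete ψ T}
  D := V
  le T T' := T.1 ⊆ T'.1
  le_refl _ := subset_rfl
  le_trans := fun {_a _b _c} h h' => Set.Subset.trans h h'
  M _ := Set.univ
  M_nonempty _ := Set.univ_nonempty
  interp p T := {args | Flower.atom p args ∈ T.1}
  interp_dom _ _ _ _ _ := Set.mem_univ _
  M_mono := fun {_w _w'} _ => subset_rfl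
  interp_mono := fun _ {_w _w'} h _ hf => h hf


section MirrorAux

variable {V P : Type} [DecidableEq V] {ar : P → ℕ}

theorem restrict_eq_self (σ : V → V) (xs : List V)
    (h : ∀ y ∈ xs, σ y = y) : restrict σ xs = σ := by
  funext y
  unfold restrict
  split <;> simp_all

theorem upd_comp {D : Type} (e : V → D) (xs : List V) (e' : V → D) (σ : V → V)
    (h : ∀ y, σ y ≠ y → y ∉ xs ∧ σ y ∉ xs) :
    (upd e xs e') ∘ σ = upd (e ∘ σ) xs e' := by
  funext y
  simp only [Function.comp, upd]
  by_cases hy : σ y = y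
  · rw [hy]
  · obtain ⟨h1, h2⟩ := h y hy
    simp [h1, h2]

mutual

theorem mirF (K : Kripke V P ar) (w : K.W) (e : V → K.D) (σ : V → V)
    (φ : Flower V P ar) (h : ∀ y, σ y ≠ y → y ∉ bvF φ ∧ σ y ∉ bvF φ) :
    forcesF K w e (applyF σ φ) ↔ forcesF K w (e ∘ σ) φ := by
  match φ with
  | .atom p args => simp [applyF, forcesF, Function.comp]
  | .flw (.mk ys Φ) Δ =>
    have hys : ∀ y ∈ ys, σ y = y := by
      intro y hy
      by_contra hne
      exact (h y hne).1 (by simp [bvF, bvG, hy])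
    have hres : restrict σ ys = σ := restrict_eq_self σ ys hys
    have hnys : ∀ y, σ y ≠ y → y ∉ ys ∧ σ y ∉ ys := by
      intro y hy
      obtain ⟨h1, h2⟩ := h y hy
      constructor <;> intro hc
      · exact h1 (by simp [bvF, bvG, hc])
      · exact h2 (by simp [bvF, bvG, hc])
    have hΦ : ∀ y, σ y ≠ y → y ∉ bvL Φ ∧ σ y ∉ bvL Φ := by
      intro y hy
      obtain ⟨h1, h2⟩ := h y hy
      constructor <;> intro hc
      · exact h1 (by simp [bvF, bvG, hc])
      · exact h2 (by simp [bvF, bvG, hc])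
    have hΔ : ∀ y, σ y ≠ y → y ∉ bvP Δ ∧ σ y ∉ bvP Δ := by
      intro y hy
      obtain ⟨h1, h2⟩ := h y hy
      constructor <;> intro hc
      · exact h1 (by simp [bvF, bvG, hc])
      · exact h2 (by simp [bvF, bvG, hc])
    simp only [applyF, hres, forcesF]
    apply forall_congr'; intro w'
    apply forall_congr'; intro hle
    apply forall_congr'; intro e'
    apply forall_congr'; intro hval
    rw [mirL K w' (upd e ys e') σ Φ hΦ, mirP K w' (upd e ys e') σ Δ hΔ,
      upd_comp e ys e' σ hnys]

theorem mirL (K : Kripke V P ar) (w : K.W) (e : V → K.D) (σ : V → V)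
    (Φ : List (Flower V P ar)) (h : ∀ y, σ y ≠ y → y ∉ bvL Φ ∧ σ y ∉ bvL Φ) :
    forcesL K w e (applyL σ Φ) ↔ forcesL K w (e ∘ σ) Φ := by
  match Φ with
  | [] => simp [applyL, forcesL]
  | φ :: Φ =>
    simp only [applyL, forcesL]
    rw [mirF K w e σ φ (by
        intro y hy
        obtain ⟨h1, h2⟩ := h y hy
        constructor <;> intro hc
        · exact h1 (by simp [bvL, hc])
        · exact h2 (by simp [bvL, hc])),
      mirL K w e σ Φ (by
        intro y hy
        obtain ⟨h1, h2⟩ := h y hy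
        constructor <;> intro hc
        · exact h1 (by simp [bvL, hc])
        · exact h2 (by simp [bvL, hc]))]

theorem mirP (K : Kripke V P ar) (w : K.W) (e : V → K.D) (σ : V → V)
    (Δ : List (Garden V P ar)) (h : ∀ y, σ y ≠ y → y ∉ bvP Δ ∧ σ y ∉ bvP Δ) :
    forcesP K w e (applyP σ Δ) ↔ forcesP K w (e ∘ σ) Δ := by
  match Δ with
  | [] => simp [applyP, forcesP]
  | .mk ys Ψ :: Δ =>
    have hys : ∀ y ∈ ys, σ y = y := by
      intro y hy
      by_contra hne
      exact (h y hne).1 (by simp [bvP, bvG, hy])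
    have hres : restrict σ ys = σ := restrict_eq_self σ ys hys
    have hnys : ∀ y, σ y ≠ y → y ∉ ys ∧ σ y ∉ ys := by
      intro y hy
      obtain ⟨h1, h2⟩ := h y hy
      constructor <;> intro hc
      · exact h1 (by simp [bvP, bvG, hc])
      · exact h2 (by simp [bvP, bvG, hc])
    simp only [applyP, hres, forcesP]
    apply or_congr
    · apply exists_congr; intro e''
      apply and_congr_right; intro _
      rw [mirL K w (upd e ys e'') σ Ψ (by
          intro y hy
          obtain ⟨h1, h2⟩ := h y hy
          constructor <;> intro hc
          · exact h1 (by simp [bvP, bvG, hc])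
          · exact h2 (by simp [bvP, bvG, hc])),
        upd_comp e ys e'' σ hnys]
    · exact mirP K w e σ Δ (by
        intro y hy
        obtain ⟨h1, h2⟩ := h y hy
        constructor <;> intro hc
        · exact h1 (by simp [bvP, hc])
        · exact h2 (by simp [bvP, hc]))

end

end MirrorAux

/-- **Mirroring** (Lemma 16): `w ⊩ σ(φ)[e]` iff `w ⊩ φ[e⟨x⃗ ↦ ⟦σ⟧_e⟩]`, for `σ` a
substitution with support `x⃗` that is capture-avoiding in `φ` and
`x⃗ ∩ bv(φ) = ∅`, where `⟦σ⟧_e (x) = e (σ x)`. -/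
theorem mirroring {V P : Type} [DecidableEq V] [Countable V] [Countable P] {ar : P → ℕ}
    (K : Kripke V P ar) (w : K.W) (e : V → K.D) (he : K.IsVal w e)
    (φ : Flower V P ar) (σ : V → V) (xs : List V)
    (hsupp : Supp σ = {x | x ∈ xs})
    (hca : CaptAvoid σ [φ]) (hdisj : ∀ x ∈ xs, x ∉ bvF φ) :
    forcesF K w e (applyF σ φ) ↔
      forcesF K w (upd e xs (fun x => e (σ x))) φ := by
  have hfix : ∀ x, x ∉ xs → σ x = x := by
    intro x hx
    by_contra hne
    exact hx (by have := hsupp ▸ (show x ∈ Supp σ from hne); simpa using this)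
  have hE : upd e xs (fun x => e (σ x)) = e ∘ σ := by
    funext x
    simp only [upd, Function.comp]
    split
    · rfl
    · rw [hfix x (by assumption)]
  rw [hE]
  apply mirF
  intro y hy
  have hyxs : y ∈ xs := by
    have := hsupp ▸ (show y ∈ Supp σ from hy)
    simpa using this
  refine ⟨hdisj y hyxs, ?_⟩
  have := hca y hy
  intro hc
  exact this (by simp [bvL, hc])

end Flowers
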